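/- arXiv:1208.4614 — 3 statements merged into one kernel-verified Lean document; each statement's English description precedes it below -/
import Mathlib

section
/- Under the same hypotheses as the bootstrap lemma but with (2) replaced by the inequality $(e^{sL}f)(x) \ge f(x)$ for all $x\in M$ and $0\le s<t$ (with $f$ real-valued), one has $(e^{sL}f)(x) \ge f(x)$ for all $x\in M$ and $0\le s<T$. -/
/-!
By Chapman–Kolmogorov and positivity of the kernels, `f ≤ P_r f` everywhere gives
`P_s f = ∫ f dμ_s ≤ ∫ P_r f dμ_s = P_{s+r} f`. Hence if `f ≤ P_s f` for `s ∈ [0, t)`, one may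
extend the range step by step in increments of `t / 2`, covering every `s < T` after finitely
many steps.
-/

open MeasureTheory ProbabilityTheory

lemma integral_le_integral_comp {α β : Type*} [MeasurableSpace α] [MeasurableSpace β]
    {m : Measure α} {κ : Kernel α β} {f : α → ℝ} {g : β → ℝ}
    (hf : Integrable f m) (hg : Integrable g (κ ∘ₘ m))
    (hle : ∀ᵐ z ∂m, f z ≤ ∫ y, g y ∂κ z) :
    ∫ z, f z ∂m ≤ ∫ y, g y ∂(κ ∘ₘ m) := by
  rw [Measure.comp_eq_comp_const_apply] at hg ⊢
  rw [Kernel.integral_comp hg]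
  exact integral_mono_ae hf (by simpa using hg.integral_comp)
    (by simpa [Filter.EventuallyLE] using hle)

namespace ProbabilityTheory

variable {α : Type*} [MeasurableSpace α] {P : ℝ → Kernel α α} {f : α → ℝ}

/-- `e^{sL} f ≥ f` for `0 ≤ s < t`, the integrated form of `L f ≥ 0`. -/
def IsSubharmonicUpTo (P : ℝ → Kernel α α) (f : α → ℝ) (t : ℝ) : Prop :=
  ∀ x : α, ∀ s : ℝ, 0 ≤ s → s < t → f x ≤ ∫ y, f y ∂(P s x)

lemma le_integral_add (hP : ∀ s r : ℝ, 0 ≤ s → 0 ≤ r → ∀ x, P (s + r) x = P r ∘ₘ P s x)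
    {s r : ℝ} (hs : 0 ≤ s) (hr : 0 ≤ r) {x : α}
    (hfs : Integrable f (P s x)) (hfsr : Integrable f (P (s + r) x))
    (hxs : f x ≤ ∫ y, f y ∂(P s x)) (hr_le : ∀ z, f z ≤ ∫ y, f y ∂(P r z)) :
    f x ≤ ∫ y, f y ∂(P (s + r) x) := by
  rw [hP s r hs hr x] at hfsr ⊢
  exact hxs.trans (integral_le_integral_comp hfs hfsr (ae_of_all _ hr_le))

theorem IsSubharmonicUpTo.of_semigroup
    (hP : ∀ s r : ℝ, 0 ≤ s → 0 ≤ r → ∀ x, P (s + r) x = P r ∘ₘ P s x)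
    {t T : ℝ} (ht : 0 < t) (hint : ∀ x : α, ∀ r : ℝ, 0 ≤ r → r < T → Integrable f (P r x))
    (hsub : IsSubharmonicUpTo P f t) : IsSubharmonicUpTo P f T := by
  have hstep (n : ℕ) : ∀ x s, 0 ≤ s → s < T → s < n * (t / 2) → f x ≤ ∫ y, f y ∂(P s x) := by
    induction n with
    | zero => intro x s hs _ hsn; simp at hsn; linarith
    | succ n ih =>
      intro x s hs hsT hsn
      by_cases hst : s < t
      · exact hsub x s hs hst
      have hs' : 0 ≤ s - t / 2 := by linarith
      have hsn' : s - t / 2 < n * (t / 2) := by push_cast at hsn; linarith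
      have h := le_integral_add hP hs' (by linarith : (0 : ℝ) ≤ t / 2)
        (hint x _ hs' (by linarith)) (by rw [sub_add_cancel]; exact hint x s hs hsT)
        (ih x _ hs' (by linarith) hsn') (fun z => hsub z _ (by linarith) (by linarith))
      rwa [sub_add_cancel] at h
  intro x s hs hsT
  obtain ⟨n, hn⟩ := exists_nat_gt (s / (t / 2))
  exact hstep n x s hs hsT (by rwa [div_lt_iff₀ (by linarith)] at hn)

end ProbabilityTheory

theorem stmt_11_general {M : Type*} [MeasurableSpace M]
    (μ : ℝ → M → Measure M)
    (hmeas : ∀ t, Measurable (μ t))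
    (hCK : ∀ s t : ℝ, 0 ≤ s → 0 ≤ t → ∀ x : M,
      μ (s + t) x = (μ s x).bind (fun z => μ t z))
    (f : M → ℝ)
    (t T : ℝ) (ht : 0 < t)
    (hint : ∀ x : M, ∀ r : ℝ, 0 ≤ r → r < T → Integrable f (μ r x))
    (hfix : ∀ x : M, ∀ s : ℝ, 0 ≤ s → s < t → f x ≤ ∫ y, f y ∂(μ s x)) :
    ∀ x : M, ∀ s : ℝ, 0 ≤ s → s < T → f x ≤ ∫ y, f y ∂(μ s x) :=
  IsSubharmonicUpTo.of_semigroup (P := fun r => ⟨μ r, hmeas r⟩) hCK ht hint hfix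

theorem stmt_11 {M : Type*} [MeasurableSpace M]
    (μ : ℝ → M → Measure M)
    (hprob : ∀ t x, IsProbabilityMeasure (μ t x))
    (hmeas : ∀ t, Measurable (μ t))
    (hCK : ∀ s t : ℝ, 0 ≤ s → 0 ≤ t → ∀ x : M,
      μ (s + t) x = (μ s x).bind (fun z => μ t z))
    (hzero : ∀ x : M, μ 0 x = Measure.dirac x)
    (f : M → ℝ) (hf : Measurable f)
    (t T : ℝ) (ht : 0 < t) (htT : t < T)
    (hint : ∀ x : M, ∀ r : ℝ, 0 ≤ r → r < T → Integrable f (μ r x))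
    (hfix : ∀ x : M, ∀ s : ℝ, 0 ≤ s → s < t → f x ≤ ∫ y, f y ∂(μ s x)) :
    ∀ x : M, ∀ s : ℝ, 0 ≤ s → s < T → f x ≤ ∫ y, f y ∂(μ s x) :=
  stmt_11_general μ hmeas hCK f t T ht hint hfix
end

section
/- Let $\{X_t\}$ be a continuous Markov process on a metric space $M$ and $f$ a continuous function on $M$ such that $\{f(X_t^x)\}_{t\ge 0}$ is a local martingale for every starting point $x$. If there exist $t>0$, $1<p<\infty$, and a constant $C<\infty$ such that $\int_M |f|^p\,d\mu_t^x < \infty$ and $\big(\sup_{y\in B(x,n)}|f(y)|\big)\, P_x(\tau_{B(x,n)}\le t)^{1/p} < C$ for all positive integers $n$, where $\tau_{B(x,n)}$ is the first exit time from the closed ball $B(x,n)$ and closed balls are compact, then $\mathbb{E}_x[f(X_t)] = f(x)$. -/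
/-!
Write `τₙ` for the exit time of the closed ball `B(x, n)` and `Kₙ = sup_{B(x, n)} |f|`. Up to
time `τₙ` the path stays in `B(x, n)`, so the local martingale `f(X)` stopped at `τₙ ∧ t` is
bounded by `Kₙ`; optional stopping for continuous martingales at bounded stopping times and
dominated convergence along the localizing sequence give `E f(X_{τₙ ∧ t}) = f(x)`. Since
`X_{τₙ ∧ t} = X_t` off `{τₙ ≤ t}`,
  `|f(x) - E f(X_t)| ≤ Kₙ P(τₙ ≤ t) + E[|f(X_t)|; τₙ ≤ t]`.
By hypothesis the first term is at most `C P(τₙ ≤ t)^(1 - 1/p)`, and the second tends to `0`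
because `f(X_t) ∈ Lᵖ ⊆ L¹`; both vanish as `P(τₙ ≤ t) → 0`.
-/

open MeasureTheory Filter Topology
open scoped NNReal

lemma IsCompact.le_biSup {β : Type*} [TopologicalSpace β] {s : Set β} (hs : IsCompact s)
    {g : β → ℝ} (hg : ContinuousOn g s) {y : β} (hy : y ∈ s) :
    g y ≤ ⨆ z ∈ s, g z := by
  refine le_ciSup₂ (f := fun z (_ : z ∈ s) => g z) ((hs.bddAbove_image hg).mono ?_) y hy
  rintro _ ⟨_, ⟨z, rfl⟩, ⟨hz, rfl⟩⟩
  exact ⟨z, hz, rfl⟩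

lemma integrable_of_lintegral_ofReal_abs_rpow_lt_top {α : Type*} {m : MeasurableSpace α}
    {μ : Measure α} [IsFiniteMeasure μ] {g : α → ℝ} (hg : AEStronglyMeasurable g μ) {p : ℝ}
    (hp : 1 ≤ p) (h : ∫⁻ a, ENNReal.ofReal (|g a| ^ p) ∂μ < ⊤) :
    Integrable g μ := by
  have hp0 : 0 < p := zero_lt_one.trans_le hp
  have hmem : MemLp g (ENNReal.ofReal p) μ := by
    refine ⟨hg, (eLpNorm_lt_top_iff_lintegral_rpow_enorm_lt_top (by simpa using hp0)
      ENNReal.ofReal_ne_top).2 ?_⟩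
    simpa [ENNReal.toReal_ofReal hp0.le, Real.enorm_eq_ofReal_abs,
      ENNReal.ofReal_rpow_of_nonneg (abs_nonneg _) hp0.le] using h
  exact hmem.integrable (ENNReal.one_le_ofReal.2 hp)

lemma MeasureTheory.UniformIntegrable.tendsto_integral_of_ae_tendsto {α : Type*}
    {m : MeasurableSpace α} {μ : Measure α} [IsFiniteMeasure μ] {f : ℕ → α → ℝ} {g : α → ℝ}
    (hUI : UniformIntegrable f 1 μ) (hfg : ∀ᵐ a ∂μ, Tendsto (fun n => f n a) atTop (𝓝 (g a))) :
    Tendsto (fun n => ∫ a, f n a ∂μ) atTop (𝓝 (∫ a, g a ∂μ)) := by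
  have hg : MemLp g 1 μ := hUI.memLp_of_ae_tendsto hfg
  exact tendsto_integral_of_L1' g hg.1
    (Eventually.of_forall fun n => (hUI.memLp n).integrable le_rfl)
    (tendsto_Lp_finite_of_tendsto_ae le_rfl ENNReal.one_ne_top hUI.1 hg hUI.2.1 hfg)

lemma abs_integral_sub_le_of_eqOn_compl {α : Type*} {m : MeasurableSpace α} {μ : Measure α}
    [IsFiniteMeasure μ] {Y Z : α → ℝ} {A : Set α} (hY : Integrable Y μ)
    (hZ : Integrable Z μ) (hYZ : ∀ a ∉ A, Y a = Z a) {K : ℝ}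
    (hK : ∀ᵐ a ∂μ, a ∈ A → |Y a| ≤ K) :
    |∫ a, Y a ∂μ - ∫ a, Z a ∂μ| ≤ K * μ.real A + ∫ a in A, |Z a| ∂μ := by
  have hdiff : ∫ a, Y a ∂μ - ∫ a, Z a ∂μ = ∫ a in A, Y a ∂μ - ∫ a in A, Z a ∂μ := by
    rw [← integral_sub hY hZ, ← integral_sub hY.integrableOn hZ.integrableOn,
      setIntegral_eq_integral_of_forall_compl_eq_zero fun a ha => sub_eq_zero.2 (hYZ a ha)]
  rw [hdiff]
  refine (abs_sub _ _).trans (add_le_add ?_ ?_)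
  · exact norm_setIntegral_le_of_norm_le_const_ae' (f := Y) (measure_lt_top μ A) hK
  · exact abs_integral_le_integral_abs

lemma tendsto_mul_zero_of_mul_rpow_le {ι : Type*} {l : Filter ι} {K a : ι → ℝ} {r C : ℝ}
    (hr : r < 1) (hK : ∀ i, 0 ≤ K i) (ha : ∀ i, 0 ≤ a i) (ha0 : Tendsto a l (𝓝 0))
    (hC : ∀ᶠ i in l, K i * a i ^ r ≤ C) :
    Tendsto (fun i => K i * a i) l (𝓝 0) := by
  have hbound : ∀ᶠ i in l, K i * a i ≤ C * a i ^ (1 - r) := by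
    filter_upwards [hC] with i hi
    rcases (ha i).eq_or_lt with hai | hai
    · rw [← hai, Real.zero_rpow (by linarith), mul_zero, mul_zero]
    · calc K i * a i = K i * a i ^ r * a i ^ (1 - r) := by
            rw [mul_assoc, ← Real.rpow_add hai, add_sub_cancel, Real.rpow_one]
        _ ≤ C * a i ^ (1 - r) := by gcongr
  refine tendsto_of_tendsto_of_tendsto_of_le_of_le' tendsto_const_nhds ?_
    (Eventually.of_forall fun i => mul_nonneg (hK i) (ha i)) hbound
  simpa using (ha0.rpow_const_nhds_zero (sub_pos.2 hr)).const_mul C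

lemma dist_le_of_le_sInf_exit {M : Type*} [PseudoMetricSpace M] {γ : ℝ≥0 → M}
    (hγ : Continuous γ) {x : M} (hγ0 : γ 0 = x) {r : ℝ} (hr : 0 ≤ r) {s : ℝ≥0}
    (hs : s ≤ sInf {u | r < dist x (γ u)}) :
    dist x (γ s) ≤ r := by
  rcases eq_or_ne s 0 with rfl | hs0
  · rwa [hγ0, dist_self]
  have hbefore : Set.Iio s ⊆ {u | dist x (γ u) ≤ r} := fun u hu => by
    by_contra hexit
    have hexit_le : sInf {u | r < dist x (γ u)} ≤ u :=
      csInf_le (OrderBot.bddBelow _) (show r < dist x (γ u) from not_le.1 hexit)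
    exact (hu.trans_le (hs.trans hexit_le)).false
  have hclosed : IsClosed {u | dist x (γ u) ≤ r} :=
    isClosed_le (continuous_const.dist hγ) continuous_const
  have hs_mem : s ∈ closure (Set.Iio s) := by
    rw [closure_Iio' ⟨0, pos_iff_ne_zero.2 hs0⟩]
    exact Set.mem_Iic.2 le_rfl
  exact hclosed.closure_subset_iff.2 hbefore hs_mem

noncomputable def gridCeil (d u : ℝ≥0) : ℝ≥0 := d * ⌈u / d⌉₊

lemma le_gridCeil {d : ℝ≥0} (hd : d ≠ 0) (u : ℝ≥0) : u ≤ gridCeil d u := by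
  rw [gridCeil, ← div_le_iff₀' (pos_iff_ne_zero.2 hd)]
  exact Nat.le_ceil _

lemma gridCeil_le_add (d u : ℝ≥0) : gridCeil d u ≤ u + d := by
  rcases eq_or_ne d 0 with rfl | hd
  · simp [gridCeil]
  calc gridCeil d u ≤ d * (u / d + 1) := mul_le_mul_right (Nat.ceil_lt_add_one zero_le).le d
    _ = u + d := by rw [mul_add, mul_one, mul_div_cancel₀ u hd]

lemma gridCeil_le_iff {d : ℝ≥0} (hd : d ≠ 0) {u s : ℝ≥0} :
    gridCeil d u ≤ s ↔ u ≤ d * ⌊s / d⌋₊ := by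
  have hd' := pos_iff_ne_zero.2 hd
  rw [gridCeil, ← le_div_iff₀' hd', ← div_le_iff₀' hd', ← Nat.ceil_le, Nat.le_floor_iff zero_le]

lemma countable_range_gridCeil (d : ℝ≥0) : (Set.range (gridCeil d)).Countable :=
  (Set.countable_range fun n : ℕ => d * n).mono <| by
    rintro _ ⟨u, rfl⟩
    exact ⟨_, rfl⟩

lemma MeasureTheory.IsStoppingTime.gridCeil {Ω : Type*} {m0 : MeasurableSpace Ω}
    {ℱ : Filtration ℝ≥0 m0} {θ : Ω → ℝ≥0} (hθ : IsStoppingTime ℱ fun ω => (θ ω : WithTop ℝ≥0))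
    {d : ℝ≥0} (hd : d ≠ 0) :
    IsStoppingTime ℱ fun ω => (gridCeil d (θ ω) : WithTop ℝ≥0) := by
  intro s
  have hle : d * ⌊s / d⌋₊ ≤ s := by
    rw [← le_div_iff₀' (pos_iff_ne_zero.2 hd)]; exact Nat.floor_le zero_le
  simp only [WithTop.coe_le_coe, gridCeil_le_iff hd]
  simpa only [WithTop.coe_le_coe] using ℱ.mono hle _ (hθ (d * ⌊s / d⌋₊))

lemma MeasureTheory.StronglyAdapted.aestronglyMeasurable_stoppedValue_of_continuous
    {ι Ω E : Type*} [TopologicalSpace ι] [TopologicalSpace.MetrizableSpace ι]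
    [SecondCountableTopology ι] [MeasurableSpace ι] [BorelSpace ι] [LinearOrder ι]
    [OrderTopology ι] [Nonempty ι] [TopologicalSpace E] [TopologicalSpace.PseudoMetrizableSpace E]
    {m0 : MeasurableSpace Ω} {μ : Measure Ω}
    {ℱ : Filtration ι m0} {M : ι → Ω → E} (hM : StronglyAdapted ℱ M)
    (hMcont : ∀ ω, Continuous fun s => M s ω) {θ : Ω → WithTop ι} (hθ : IsStoppingTime ℱ θ)
    {t : ι} (hθt : ∀ ω, θ ω ≤ t) :
    AEStronglyMeasurable (stoppedValue M θ) μ :=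
  ((stronglyMeasurable_stoppedValue_of_le (hM.isStronglyProgressive_of_continuous hMcont) hθ
    hθt).mono (ℱ.le t)).aestronglyMeasurable

theorem MeasureTheory.Martingale.integral_stoppedValue_of_continuous {Ω : Type*}
    {m0 : MeasurableSpace Ω} {ℱ : Filtration ℝ≥0 m0} {μ : Measure Ω} [IsFiniteMeasure μ]
    {M : ℝ≥0 → Ω → ℝ} (hM : Martingale M ℱ μ) (hMcont : ∀ ω, Continuous fun s => M s ω)
    {θ : Ω → ℝ≥0} (hθ : IsStoppingTime ℱ fun ω => (θ ω : WithTop ℝ≥0)) {t : ℝ≥0}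
    (hθt : ∀ ω, θ ω ≤ t) :
    ∫ ω, M (θ ω) ω ∂μ = ∫ ω, M t ω ∂μ := by
  set d : ℕ → ℝ≥0 := fun j => 2⁻¹ ^ j
  have hd : ∀ j, d j ≠ 0 := fun j => by simp [d]
  have hd_lim : Tendsto d atTop (𝓝 0) :=
    NNReal.tendsto_pow_atTop_nhds_zero_of_lt_one (by norm_num)
  -- Rounding `θ` up to the grid `d j • ℕ` gives countably-valued stopping times, to which discrete
  -- optional sampling applies; they decrease to `θ`, and `M_{ρ j} = E[M_t | ℱ_{ρ j}]` is
  -- uniformly integrable, so the integrals pass to the limit.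
  set ρ : ℕ → Ω → WithTop ℝ≥0 := fun j ω => (min (gridCeil (d j) (θ ω)) t : ℝ≥0)
  have hρ : ∀ j, IsStoppingTime ℱ (ρ j) := fun j => by
    simpa only [ρ, WithTop.coe_min] using (hθ.gridCeil (hd j)).min_const t
  have hρt : ∀ j ω, ρ j ω ≤ t := fun j ω => WithTop.coe_le_coe.2 (min_le_right _ _)
  have hρ_countable : ∀ j, (Set.range (ρ j)).Countable := fun j =>
    ((countable_range_gridCeil (d j)).image fun u => ((min u t : ℝ≥0) : WithTop ℝ≥0)).mono <| by
      rintro _ ⟨ω, rfl⟩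
      exact ⟨_, ⟨θ ω, rfl⟩, rfl⟩
  have hcondExp : ∀ j, stoppedValue M (ρ j) =ᵐ[μ] μ[M t | (hρ j).measurableSpace] := fun j =>
    hM.stoppedValue_ae_eq_condExp_of_le_const_of_countable_range (hρ j) (hρt j) (hρ_countable j)
  have hUI : UniformIntegrable (fun j => stoppedValue M (ρ j)) 1 μ :=
    ((hM.integrable t).uniformIntegrable_condExp fun j => (hρ j).measurableSpace_le).ae_eq
      fun j => (hcondExp j).symm
  have hlim : ∀ ω, Tendsto (fun j => stoppedValue M (ρ j) ω) atTop (𝓝 (M (θ ω) ω)) := by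
    intro ω
    have hρθ : Tendsto (fun j => min (gridCeil (d j) (θ ω)) t) atTop (𝓝 (θ ω)) :=
      tendsto_of_tendsto_of_tendsto_of_le_of_le tendsto_const_nhds
        (by simpa using tendsto_const_nhds.add hd_lim)
        (fun j => le_min (le_gridCeil (hd j) _) (hθt ω))
        (fun j => (min_le_left _ _).trans (gridCeil_le_add _ _))
    exact ((hMcont ω).tendsto _).comp hρθ
  have hint : ∀ j, ∫ ω, stoppedValue M (ρ j) ω ∂μ = ∫ ω, M t ω ∂μ := fun j => by
    rw [integral_congr_ae (hcondExp j), integral_condExp (hρ j).measurableSpace_le]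
  refine tendsto_nhds_unique (hUI.tendsto_integral_of_ae_tendsto (ae_of_all _ hlim)) ?_
  simp_rw [hint]
  exact tendsto_const_nhds

theorem integral_stopped_eq_integral_zero_of_localizing {Ω : Type*} {m0 : MeasurableSpace Ω}
    {ℱ : Filtration ℝ≥0 m0} {μ : Measure Ω} [IsFiniteMeasure μ] {Y : ℝ≥0 → Ω → ℝ}
    (hY : ∀ ω, Continuous fun s => Y s ω) {σ : ℕ → Ω → ℝ≥0}
    (hσ : ∀ ω, Tendsto (fun k => σ k ω) atTop atTop)
    (hmart : ∀ k, Martingale (stoppedProcess Y fun ω => (σ k ω : WithTop ℝ≥0)) ℱ μ)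
    {θ : Ω → ℝ≥0} (hθ : IsStoppingTime ℱ fun ω => (θ ω : WithTop ℝ≥0)) {t : ℝ≥0}
    (hθt : ∀ ω, θ ω ≤ t) {K : ℝ} (hbd : ∀ᵐ ω ∂μ, ∀ s ≤ θ ω, |Y s ω| ≤ K) :
    ∫ ω, Y (θ ω) ω ∂μ = ∫ ω, Y 0 ω ∂μ := by
  set F : ℕ → Ω → ℝ := fun k ω => Y (min (θ ω) (σ k ω)) ω
  have hstopped_cont : ∀ k ω, Continuous fun s => Y (min s (σ k ω)) ω := fun k ω =>
    (hY ω).comp (continuous_id.min continuous_const)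
  have hF_meas : ∀ k, AEStronglyMeasurable (F k) μ := fun k =>
    (hmart k).stronglyAdapted.aestronglyMeasurable_stoppedValue_of_continuous
      (hstopped_cont k) hθ fun ω => WithTop.coe_le_coe.2 (hθt ω)
  have hF_bd : ∀ k, ∀ᵐ ω ∂μ, ‖F k ω‖ ≤ K := fun k => by
    filter_upwards [hbd] with ω hω using hω _ (min_le_left _ _)
  have hF_lim : ∀ ω, Tendsto (fun k => F k ω) atTop (𝓝 (Y (θ ω) ω)) := fun ω =>
    tendsto_const_nhds.congr' <| by
      filter_upwards [(hσ ω).eventually_ge_atTop (θ ω)] with k hk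
      simp only [F, min_eq_left hk]
  have hF_int : ∀ k, ∫ ω, F k ω ∂μ = ∫ ω, Y 0 ω ∂μ := fun k => by
    have h0 : ∀ ω, stoppedProcess Y (fun ω => (σ k ω : WithTop ℝ≥0)) 0 ω = Y 0 ω := fun ω => by
      show Y (min 0 (σ k ω)) ω = Y 0 ω
      rw [min_eq_left zero_le]
    calc ∫ ω, F k ω ∂μ = ∫ ω, stoppedProcess Y (fun ω => (σ k ω : WithTop ℝ≥0)) t ω ∂μ :=
          (hmart k).integral_stoppedValue_of_continuous (hstopped_cont k) hθ hθt
      _ = ∫ ω, stoppedProcess Y (fun ω => (σ k ω : WithTop ℝ≥0)) 0 ω ∂μ := by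
          simpa using ((hmart k).setIntegral_eq zero_le MeasurableSet.univ).symm
      _ = ∫ ω, Y 0 ω ∂μ := by simp_rw [h0]
  have hDCT := tendsto_integral_of_dominated_convergence (fun _ => K) hF_meas
    (integrable_const K) hF_bd (ae_of_all _ hF_lim)
  simp_rw [hF_int] at hDCT
  exact tendsto_nhds_unique hDCT tendsto_const_nhds

theorem abs_sub_integral_le_of_localizing {Ω : Type*} {m0 : MeasurableSpace Ω}
    {ℱ : Filtration ℝ≥0 m0} {μ : Measure Ω} [IsProbabilityMeasure μ] {Y : ℝ≥0 → Ω → ℝ}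
    (hY : ∀ ω, Continuous fun s => Y s ω) (hY_meas : ∀ s, Measurable (Y s))
    {σ : ℕ → Ω → ℝ≥0} (hσ : ∀ ω, Tendsto (fun k => σ k ω) atTop atTop)
    (hmart : ∀ k, Martingale (stoppedProcess Y fun ω => (σ k ω : WithTop ℝ≥0)) ℱ μ)
    {c : ℝ} (hY0 : ∀ᵐ ω ∂μ, Y 0 ω = c) {τ : Ω → ℝ≥0}
    (hτ : IsStoppingTime ℱ fun ω => (τ ω : WithTop ℝ≥0)) {K : ℝ}
    (hbd : ∀ᵐ ω ∂μ, ∀ s ≤ τ ω, |Y s ω| ≤ K) {t : ℝ≥0} (hYt : Integrable (Y t) μ) :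
    |c - ∫ ω, Y t ω ∂μ| ≤ K * μ.real {ω | τ ω ≤ t} + ∫ ω in {ω | τ ω ≤ t}, |Y t ω| ∂μ := by
  set θ : Ω → ℝ≥0 := fun ω => min (τ ω) t
  have hθ : IsStoppingTime ℱ fun ω => (θ ω : WithTop ℝ≥0) := by
    simpa only [θ, WithTop.coe_min] using hτ.min_const t
  have hθ_bd : ∀ᵐ ω ∂μ, ∀ s ≤ θ ω, |Y s ω| ≤ K := by
    filter_upwards [hbd] with ω hω s hs using hω s (hs.trans (min_le_left _ _))
  have hYθ : ∫ ω, Y (θ ω) ω ∂μ = c := by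
    rw [integral_stopped_eq_integral_zero_of_localizing hY hσ hmart hθ
      (fun ω => min_le_right _ _) hθ_bd, integral_congr_ae hY0, integral_const, probReal_univ,
      one_smul]
  have hYθ_meas : Measurable fun ω => Y (θ ω) ω :=
    (measurable_uncurry_of_continuous_of_measurable hY hY_meas).comp
      ((hθ.measurable.mono hθ.measurableSpace_le le_rfl).untopA.prodMk measurable_id)
  rw [← hYθ]
  refine abs_integral_sub_le_of_eqOn_compl
    (Integrable.of_bound hYθ_meas.aestronglyMeasurable K ?_) hYt (fun ω hω => ?_) ?_
  · filter_upwards [hθ_bd] with ω hω using hω _ le_rfl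
  · simp only [θ, min_eq_right (not_le.1 (show ¬τ ω ≤ t from hω)).le]
  · filter_upwards [hθ_bd] with ω hω _ using hω _ le_rfl

theorem stmt_12 {M : Type*} [MetricSpace M] [ProperSpace M]
    [MeasurableSpace M] [BorelSpace M]
    {Ω : Type*} {m0 : MeasurableSpace Ω}
    (ℱ : Filtration NNReal m0)
    (P : M → Measure Ω) (hP : ∀ x, IsProbabilityMeasure (P x))
    (X : NNReal → Ω → M)
    (hXmeas : ∀ t, Measurable (X t))
    (hcont : ∀ ω, Continuous fun t => X t ω)
    (hstart : ∀ x : M, ∀ᵐ ω ∂P x, X 0 ω = x)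
    (f : M → ℝ) (hf : Continuous f)
    -- {f(X_t^x)} is a local martingale for every starting point x:
    (hlocmart : ∀ x : M, ∃ σ : ℕ → Ω → NNReal,
      (∀ n, IsStoppingTime ℱ (fun ω => (σ n ω : WithTop NNReal))) ∧ (∀ ω, Monotone fun n => σ n ω) ∧
      (∀ ω, Tendsto (fun n => σ n ω) atTop atTop) ∧
      ∀ n, Martingale
        (MeasureTheory.stoppedProcess (fun t ω => f (X t ω)) (fun ω => (σ n ω : WithTop NNReal))) ℱ (P x))
    (x : M) (t : NNReal) (p : ℝ) (hp : 1 < p)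
    (τ : ℕ → Ω → NNReal)
    -- τ n is the first exit time from the closed ball B(x,n):
    (hτdef : ∀ (n : ℕ) (ω : Ω), τ n ω = sInf {s : NNReal | (n : ℝ) < dist x (X s ω)})
    (hτstop : ∀ n, IsStoppingTime ℱ (fun ω => (τ n ω : WithTop NNReal)))
    -- stochastic completeness:
    (hsc : Tendsto (fun n : ℕ => (P x) {ω | τ n ω ≤ t}) atTop (nhds 0))
    (hfp : ∫⁻ y, ENNReal.ofReal (|f y| ^ p) ∂((P x).map (X t)) < ⊤)
    (C : ℝ)
    (hbdd : ∀ n : ℕ, 0 < n →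
      (⨆ y ∈ Metric.closedBall x n, |f y|) *
        ((P x) {ω | τ n ω ≤ t}).toReal ^ (1 / p) < C) :
    ∫ ω, f (X t ω) ∂(P x) = f x := by
  have := hP x
  obtain ⟨σ, -, -, hσ_lim, hσ_mart⟩ := hlocmart x
  set K : ℕ → ℝ := fun n => ⨆ y ∈ Metric.closedBall x n, |f y|
  have hK : ∀ n : ℕ, ∀ y ∈ Metric.closedBall x n, |f y| ≤ K n := fun n _ hy =>
    (isCompact_closedBall x n).le_biSup hf.abs.continuousOn hy
  have hbefore_exit : ∀ n, ∀ᵐ ω ∂P x, ∀ s ≤ τ n ω, |f (X s ω)| ≤ K n := fun n => by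
    filter_upwards [hstart x] with ω hω s hs
    refine hK n _ ?_
    rw [Metric.mem_closedBall, dist_comm]
    exact dist_le_of_le_sInf_exit (hcont ω) hω n.cast_nonneg (hτdef n ω ▸ hs)
  have hfXt : Integrable (fun ω => f (X t ω)) (P x) :=
    (integrable_of_lintegral_ofReal_abs_rpow_lt_top hf.aestronglyMeasurable hp.le
      hfp).comp_measurable (hXmeas t)
  have hestimate : ∀ n, |f x - ∫ ω, f (X t ω) ∂P x| ≤
      K n * (P x).real {ω | τ n ω ≤ t} + ∫ ω in {ω | τ n ω ≤ t}, |f (X t ω)| ∂P x := fun n =>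
    abs_sub_integral_le_of_localizing (fun ω => hf.comp (hcont ω))
      (fun s => hf.measurable.comp (hXmeas s)) hσ_lim hσ_mart
      ((hstart x).mono fun ω hω => congrArg f hω) (hτstop n) (hbefore_exit n) hfXt
  have hP_exit : Tendsto (fun n => (P x).real {ω | τ n ω ≤ t}) atTop (𝓝 0) := by
    simpa [Measure.real, Function.comp_def] using
      (ENNReal.tendsto_toReal ENNReal.zero_ne_top).comp hsc
  have hbound_lim : Tendsto (fun n => K n * (P x).real {ω | τ n ω ≤ t} +
      ∫ ω in {ω | τ n ω ≤ t}, |f (X t ω)| ∂P x) atTop (𝓝 0) := by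
    refine zero_add (0 : ℝ) ▸ (tendsto_mul_zero_of_mul_rpow_le (r := 1 / p) (C := C)
      ((div_lt_one (zero_lt_one.trans hp)).2 hp)
      (fun n => (abs_nonneg _).trans (hK n x (Metric.mem_closedBall_self n.cast_nonneg)))
      (fun _ => measureReal_nonneg) hP_exit ?_).add (hfXt.abs.tendsto_setIntegral_nhds_zero hsc)
    filter_upwards [eventually_gt_atTop 0] with n hn using (hbdd n hn).le
  have hdiff : |f x - ∫ ω, f (X t ω) ∂P x| ≤ 0 := ge_of_tendsto' hbound_lim hestimate
  linarith [abs_nonpos_iff.1 hdiff]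
end

section
/- Let $M$ be a complete Riemannian manifold with heat kernel $\mu_t(x,y)$ for the operator $\Delta/2$, satisfying a Gaussian upper bound $\mu_{T+\epsilon}(o,y) \le C\, e^{c(d(o,y))}\exp\big(-\tfrac{2 d(o,y)^2}{(4+\delta)(T+\epsilon)}\big)$ and a Gaussian lower bound $\mu_T(o,y) \ge \tilde{C}\, e^{-\tilde{c}(d(o,y))}\exp\big(-\tfrac{d(o,y)^2}{2T}\big)$, where $c, \tilde{c}$ grow at most linearly, and suppose $\int_M \mu_T(o,y)^{1/2}\,V(dy) < \infty$. If $f \in L^p(M,\mu_T^o)$ for some $1<p<\infty$ and $1 < r < p$, then there exists $\epsilon>0$ such that $f \in L^r(M,\mu_{T+\epsilon}^o)$. -/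
/-!
Put s = p / r and let q be its conjugate exponent. By Hölder's inequality, `L^p(μ_T)` embeds
in `L^r(μ_{T+ε})` as soon as the density ratio `g = μ_{T+ε} / μ_T` lies in `L^q(μ_T)`, that is
`∫ μ_T g^q dV < ∞`. The Gaussian bounds make `μ_{T+ε}^q / μ_T^(q-1/2)` bounded by a Gaussian in
`d(o, y)` times an exponential of a linear term, hence bounded, as soon as
`2q / ((4+δ)(T+ε)) > (q - 1/2) / (2T)`; for small `δ = ε` this holds because at `δ = ε = 0` the
two sides differ by `1 / (4T)`. Then `μ_T g^q ≤ K μ_T^(1/2)`, which is integrable.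
-/

open MeasureTheory Real Filter Topology
open scoped ENNReal

theorem MeasureTheory.MemLp.withDensity_of_lintegral_rpow_lt_top {α E : Type*}
    [MeasurableSpace α] [NormedAddCommGroup E] {μ : Measure α} {f : α → E} {g : α → ℝ≥0∞}
    {p q r : ℝ} (hr : 0 < r) (hpq : (p / r).HolderConjugate q) (hg : AEMeasurable g μ)
    (hgq : ∫⁻ x, g x ^ q ∂μ < ∞) (hf : MemLp f (ENNReal.ofReal p) μ) :
    MemLp f (ENNReal.ofReal r) (μ.withDensity g) := by
  have hp : 0 < p := (div_pos_iff_of_pos_right hr).1 hpq.pos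
  refine ⟨hf.1.mono_ac (withDensity_absolutelyContinuous μ g), ?_⟩
  have hfr : AEMeasurable (fun x ↦ ‖f x‖ₑ ^ r) μ := hf.1.enorm.pow_const r
  have hfp : ∫⁻ x, (‖f x‖ₑ ^ r) ^ (p / r) ∂μ < ∞ := by
    have := lintegral_rpow_enorm_lt_top_of_eLpNorm_lt_top (by simpa using hp)
      ENNReal.ofReal_ne_top hf.2
    simpa [← ENNReal.rpow_mul, mul_div_cancel₀ _ hr.ne', ENNReal.toReal_ofReal hp.le] using this
  rw [eLpNorm_lt_top_iff_lintegral_rpow_enorm_lt_top (by simpa using hr) ENNReal.ofReal_ne_top,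
    ENNReal.toReal_ofReal hr.le, lintegral_withDensity_eq_lintegral_mul₀ hg hfr, mul_comm]
  calc ∫⁻ x, ((fun x ↦ ‖f x‖ₑ ^ r) * g) x ∂μ
      ≤ (∫⁻ x, (‖f x‖ₑ ^ r) ^ (p / r) ∂μ) ^ (1 / (p / r)) * (∫⁻ x, g x ^ q ∂μ) ^ (1 / q) :=
        ENNReal.lintegral_mul_le_Lp_mul_Lq μ hpq hfr hg
    _ < ∞ := ENNReal.mul_lt_top
        (ENNReal.rpow_lt_top_of_nonneg hpq.one_div_nonneg hfp.ne)
        (ENNReal.rpow_lt_top_of_nonneg hpq.symm.one_div_nonneg hgq.ne)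

theorem MeasureTheory.MemLp.withDensity_ofReal_of_lintegral_ratio_rpow_lt_top {α E : Type*}
    [MeasurableSpace α] [NormedAddCommGroup E] {V : Measure α} {ρ₀ ρ₁ : α → ℝ} {f : α → E}
    {p q r : ℝ}
    (hρ₀ : Measurable ρ₀) (hρ₁ : Measurable ρ₁) (h₀ : ∀ x, 0 < ρ₀ x) (h₁ : ∀ x, 0 ≤ ρ₁ x)
    (hr : 0 < r) (hpq : (p / r).HolderConjugate q)
    (hint : ∫⁻ x, ENNReal.ofReal (ρ₀ x * (ρ₁ x / ρ₀ x) ^ q) ∂V < ∞)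
    (hf : MemLp f (ENNReal.ofReal p) (V.withDensity fun x ↦ ENNReal.ofReal (ρ₀ x))) :
    MemLp f (ENNReal.ofReal r) (V.withDensity fun x ↦ ENNReal.ofReal (ρ₁ x)) := by
  have hratio : Measurable fun x ↦ ENNReal.ofReal (ρ₁ x / ρ₀ x) := (hρ₁.div hρ₀).ennreal_ofReal
  have hdens : (fun x ↦ ENNReal.ofReal (ρ₁ x)) =
      (fun x ↦ ENNReal.ofReal (ρ₀ x)) * fun x ↦ ENNReal.ofReal (ρ₁ x / ρ₀ x) := by
    ext x
    simp [← ENNReal.ofReal_mul (h₀ x).le, mul_div_cancel₀ _ (h₀ x).ne']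
  rw [hdens, withDensity_mul V hρ₀.ennreal_ofReal hratio]
  refine hf.withDensity_of_lintegral_rpow_lt_top hr hpq hratio.aemeasurable ?_
  rw [lintegral_withDensity_eq_lintegral_mul _ hρ₀.ennreal_ofReal (hratio.pow_const q)]
  refine (lintegral_congr fun x ↦ ?_).trans_lt hint
  rw [Pi.mul_apply, ENNReal.ofReal_rpow_of_nonneg (div_nonneg (h₁ x) (h₀ x).le) hpq.symm.nonneg,
    ← ENNReal.ofReal_mul (h₀ x).le]

lemma mul_sub_mul_sq_le_sq_div {a b : ℝ} (hb : 0 < b) (d : ℝ) :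
    a * d - b * d ^ 2 ≤ a ^ 2 / (4 * b) := by
  rw [le_div_iff₀ (by positivity)]
  nlinarith [sq_nonneg (2 * b * d - a)]

lemma exists_gaussian_rpow_le {C c α C' c' β q q' : ℝ} (hC : 0 < C) (hC' : 0 < C')
    (hαβ : q' * β < q * α) :
    ∃ K, 0 < K ∧ ∀ d : ℝ, (C * exp (c * d) * exp (-(α * d ^ 2))) ^ q ≤
      K * (C' * exp (-(c' * d)) * exp (-(β * d ^ 2))) ^ q' := by
  set a := q * c + q' * c'
  set b := q * α - q' * β
  have hb : 0 < b := sub_pos.2 hαβ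
  refine ⟨C ^ q / C' ^ q' * exp (a ^ 2 / (4 * b)), by positivity, fun d ↦ ?_⟩
  have hquad : (q * c + q' * c') * d - (q * α - q' * β) * d ^ 2 ≤ a ^ 2 / (4 * b) :=
    mul_sub_mul_sq_le_sq_div hb d
  simp only [mul_rpow (by positivity : 0 ≤ C * exp _) (exp_pos _).le,
    mul_rpow hC.le (exp_pos _).le, mul_rpow hC'.le (exp_pos _).le,
    mul_rpow (by positivity : 0 ≤ C' * exp _) (exp_pos _).le, ← exp_mul]
  calc C ^ q * exp (c * d * q) * exp (-(α * d ^ 2) * q)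
      = C ^ q * exp (c * d * q + -(α * d ^ 2) * q) := by rw [exp_add]; ring
    _ ≤ C ^ q * exp (a ^ 2 / (4 * b) + (-(c' * d) * q' + -(β * d ^ 2) * q')) := by
      refine mul_le_mul_of_nonneg_left (exp_le_exp.2 ?_) (by positivity)
      linarith
    _ = C ^ q / C' ^ q' * exp (a ^ 2 / (4 * b)) *
          (C' ^ q' * exp (-(c' * d) * q') * exp (-(β * d ^ 2) * q')) := by
      rw [exp_add, exp_add]
      field_simp

lemma mul_div_rpow_le_mul_sqrt {u l q K : ℝ} (hu : 0 ≤ u) (hl : 0 < l)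
    (h : u ^ q ≤ K * l ^ (q - 1 / 2)) : l * (u / l) ^ q ≤ K * √l := by
  rw [div_rpow hu hl.le]
  calc l * (u ^ q / l ^ q) ≤ l * (K * l ^ (q - 1 / 2) / l ^ q) := by gcongr
    _ = K * √l := by
      rw [rpow_sub hl, ← sqrt_eq_rpow]
      field_simp
      rw [sq_sqrt hl.le, mul_comm]

lemma exists_gaussian_exponent_gap {T : ℝ} (hT : 0 < T) (q : ℝ) :
    ∃ η, 0 < η ∧ η < 1 ∧ (q - 1 / 2) * (1 / (2 * T)) < q * (2 / ((4 + η) * (T + η))) := by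
  have hcont : ContinuousAt (fun η : ℝ ↦ (q - 1 / 2) * ((4 + η) * (T + η))) 0 := by fun_prop
  have hgap : ∀ᶠ η in 𝓝[>] (0 : ℝ), (q - 1 / 2) * ((4 + η) * (T + η)) < 4 * q * T :=
    nhdsWithin_le_nhds <| hcont.eventually_lt continuousAt_const (by linarith)
  have hsmall : ∀ᶠ η in 𝓝[>] (0 : ℝ), η < 1 := nhdsWithin_le_nhds <| eventually_lt_nhds one_pos
  obtain ⟨η, hη0 : 0 < η, hη1, hη⟩ :=
    (eventually_mem_nhdsWithin.and (hsmall.and hgap)).exists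
  refine ⟨η, hη0, hη1, ?_⟩
  rw [mul_one_div, ← mul_div_assoc, div_lt_div_iff₀ (by positivity) (by positivity)]
  linarith

lemma exists_rpow_le_mul_rpow_of_gaussian_bounds {ι : Type*} {u l d : ι → ℝ}
    {C c α C' c' β q q' : ℝ} (hC : 0 < C) (hC' : 0 < C') (hq : 0 ≤ q) (hq' : 0 ≤ q')
    (hαβ : q' * β < q * α) (hu₀ : ∀ i, 0 ≤ u i)
    (hu : ∀ i, u i ≤ C * exp (c * d i) * exp (-(α * d i ^ 2)))
    (hl : ∀ i, C' * exp (-(c' * d i)) * exp (-(β * d i ^ 2)) ≤ l i) :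
    ∃ K, 0 < K ∧ ∀ i, u i ^ q ≤ K * l i ^ q' := by
  obtain ⟨K, hK, hgauss⟩ := exists_gaussian_rpow_le (c := c) (c' := c') hC hC' hαβ
  refine ⟨K, hK, fun i ↦ ?_⟩
  calc u i ^ q ≤ (C * exp (c * d i) * exp (-(α * d i ^ 2))) ^ q :=
        rpow_le_rpow (hu₀ i) (hu i) hq
    _ ≤ K * (C' * exp (-(c' * d i)) * exp (-(β * d i ^ 2))) ^ q' := hgauss (d i)
    _ ≤ K * l i ^ q' := by gcongr; exact hl i

theorem stmt_18_general {M : Type*} [MetricSpace M] [MeasurableSpace M]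
    (V : Measure M)
    (μ : ℝ → M → M → ℝ) (o : M) (T : ℝ) (hT : 0 < T)
    (hmeas : ∀ t x, Measurable (μ t x))
    (hnonneg : ∀ t x y, 0 ≤ μ t x y)
    -- Gaussian upper bound for the kernels at times T + ε, with a prefactor
    -- growing at most exponentially in the distance:
    (hupper : ∀ ε : ℝ, 0 < ε → ∀ δ : ℝ, 0 < δ → δ < 1 →
      ∃ C c : ℝ, 0 < C ∧ 0 ≤ c ∧ ∀ y : M,
        μ (T + ε) o y ≤ C * Real.exp (c * dist o y) *
          Real.exp (-(2 * dist o y ^ 2) / ((4 + δ) * (T + ε))))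
    -- Gaussian lower bound at time T, with a prefactor decaying at most
    -- exponentially in the distance:
    (hlower : ∃ C' c' : ℝ, 0 < C' ∧ 0 ≤ c' ∧ ∀ y : M,
      C' * Real.exp (-(c' * dist o y)) * Real.exp (-(dist o y ^ 2) / (2 * T)) ≤ μ T o y)
    (hint : ∫⁻ y, ENNReal.ofReal (Real.sqrt (μ T o y)) ∂V < ⊤)
    (p r : ℝ) (hr : 1 < r) (hrp : r < p)
    (f : M → ℝ)
    (hf : MemLp f (ENNReal.ofReal p) (V.withDensity (fun y => ENNReal.ofReal (μ T o y)))) :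
    ∃ ε : ℝ, 0 < ε ∧
      MemLp f (ENNReal.ofReal r)
        (V.withDensity (fun y => ENNReal.ofReal (μ (T + ε) o y))) := by
  have hr₀ : 0 < r := one_pos.trans hr
  set q := (p / r).conjExponent
  have hpq : (p / r).HolderConjugate q := .conjExponent ((one_lt_div hr₀).2 hrp)
  obtain ⟨C', c', hC', -, hlow⟩ := hlower
  have hpos : ∀ y, 0 < μ T o y := fun y ↦ (by positivity : 0 < C' * _ * _).trans_le (hlow y)
  obtain ⟨η, hη₀, hη₁, hgap⟩ := exists_gaussian_exponent_gap hT q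
  obtain ⟨C, c, hC, -, hup⟩ := hupper η hη₀ η hη₀ hη₁
  obtain ⟨K, hK, hkernel⟩ := exists_rpow_le_mul_rpow_of_gaussian_bounds (c := c) (c' := c')
    (d := dist o) (u := fun y ↦ μ (T + η) o y) (l := fun y ↦ μ T o y) hC hC' hpq.symm.nonneg
    (by linarith [hpq.symm.lt]) hgap (hnonneg _ _)
    (fun y ↦ (hup y).trans_eq (by rw [neg_div, mul_div_right_comm]))
    (fun y ↦ (hlow y).trans_eq' (by rw [neg_div, one_div_mul_eq_div]))
  refine ⟨η, hη₀, hf.withDensity_ofReal_of_lintegral_ratio_rpow_lt_top (hmeas _ _) (hmeas _ _)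
    hpos (hnonneg _ _) hr₀ hpq ?_⟩
  calc ∫⁻ y, ENNReal.ofReal (μ T o y * (μ (T + η) o y / μ T o y) ^ q) ∂V
      ≤ ∫⁻ y, ENNReal.ofReal K * ENNReal.ofReal √(μ T o y) ∂V := lintegral_mono fun y ↦ by
        rw [← ENNReal.ofReal_mul hK.le]
        exact ENNReal.ofReal_le_ofReal
          (mul_div_rpow_le_mul_sqrt (hnonneg _ _ _) (hpos y) (hkernel y))
    _ = ENNReal.ofReal K * ∫⁻ y, ENNReal.ofReal √(μ T o y) ∂V :=
        lintegral_const_mul' _ _ ENNReal.ofReal_ne_top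
    _ < ∞ := ENNReal.mul_lt_top ENNReal.ofReal_lt_top hint

theorem stmt_18 {M : Type*} [MetricSpace M] [MeasurableSpace M] [BorelSpace M]
    (V : Measure M)
    (μ : ℝ → M → M → ℝ) (o : M) (T : ℝ) (hT : 0 < T)
    (hmeas : ∀ t x, Measurable (μ t x))
    (hnonneg : ∀ t x y, 0 ≤ μ t x y)
    -- Gaussian upper bound for the kernels at times T + ε, with a prefactor
    -- growing at most exponentially in the distance:
    (hupper : ∀ ε : ℝ, 0 < ε → ∀ δ : ℝ, 0 < δ → δ < 1 →
      ∃ C c : ℝ, 0 < C ∧ 0 ≤ c ∧ ∀ y : M,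
        μ (T + ε) o y ≤ C * Real.exp (c * dist o y) *
          Real.exp (-(2 * dist o y ^ 2) / ((4 + δ) * (T + ε))))
    -- Gaussian lower bound at time T, with a prefactor decaying at most
    -- exponentially in the distance:
    (hlower : ∃ C' c' : ℝ, 0 < C' ∧ 0 ≤ c' ∧ ∀ y : M,
      C' * Real.exp (-(c' * dist o y)) * Real.exp (-(dist o y ^ 2) / (2 * T)) ≤ μ T o y)
    (hint : ∫⁻ y, ENNReal.ofReal (Real.sqrt (μ T o y)) ∂V < ⊤)
    (p r : ℝ) (hp : 1 < p) (hr : 1 < r) (hrp : r < p)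
    (f : M → ℝ)
    (hf : MemLp f (ENNReal.ofReal p) (V.withDensity (fun y => ENNReal.ofReal (μ T o y)))) :
    ∃ ε : ℝ, 0 < ε ∧
      MemLp f (ENNReal.ofReal r)
        (V.withDensity (fun y => ENNReal.ofReal (μ (T + ε) o y))) :=
  stmt_18_general V μ o T hT hmeas hnonneg hupper hlower hint p r hr hrp f hf
end
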